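/- arXiv:1511.09143 — 2 statements merged into one kernel-verified Lean document; each statement's English description precedes it below -/
import Mathlib

section
/- In the vector space with basis {u_{i,j} : i,j ≥ 0} and linear map ∂u_{i,j} = u_{i+1,j} + u_{i,j+1}, the two families {u_{i,j} : i,j ≥ 0} and {∂^n u_{0,m} : m,n ≥ 0} span the same subspace, namely the whole space. -/
/-!
Every `u (i, j)` is a combination of the vectors `∂ⁿ u (0, m)`, by induction on `i`:
`u (0, m) = ∂⁰ u (0, m)`, and `u (i + 1, j) = ∂ u (i, j) - u (i, j + 1)`, where the span of the
vectors `∂ⁿ u (0, m)` is `∂`-invariant.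
-/

open Finsupp Submodule

section

variable {R : Type*} [Ring R] (D : ((ℕ × ℕ) →₀ R) →ₗ[R] ((ℕ × ℕ) →₀ R))

lemma span_exists_single_one_eq_top :
    span R {x : (ℕ × ℕ) →₀ R | ∃ i j : ℕ, x = single (i, j) 1} = ⊤ := by
  convert (Finsupp.basisSingleOne : Module.Basis (ℕ × ℕ) R _).span_eq using 2
  ext x
  simp [eq_comm]

lemma mapsTo_span_iterate_single :
    Set.MapsTo D (span R {x | ∃ m n : ℕ, x = D^[n] (single (0, m) 1)})
      (span R {x | ∃ m n : ℕ, x = D^[n] (single (0, m) 1)}) :=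
  mapsTo_span <| by
    rintro _ ⟨m, n, rfl⟩
    exact ⟨m, n + 1, (Function.iterate_succ_apply' D n _).symm⟩

variable {D}

lemma single_mem_span_iterate_single
    (hD : ∀ i j : ℕ, D (single (i, j) 1) = single (i + 1, j) 1 + single (i, j + 1) 1)
    (i j : ℕ) : single (i, j) 1 ∈ span R {x | ∃ m n : ℕ, x = D^[n] (single (0, m) 1)} := by
  induction i generalizing j with
  | zero => exact subset_span ⟨j, 0, rfl⟩
  | succ i ih =>
    have hD_mem := mapsTo_span_iterate_single D (ih j)
    rw [hD] at hD_mem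
    simpa only [add_sub_cancel_right] using sub_mem hD_mem (ih (j + 1))

lemma span_iterate_single_eq_top
    (hD : ∀ i j : ℕ, D (single (i, j) 1) = single (i + 1, j) 1 + single (i, j + 1) 1) :
    span R {x | ∃ m n : ℕ, x = D^[n] (single (0, m) 1)} = ⊤ := by
  rw [eq_top_iff, ← span_exists_single_one_eq_top, span_le]
  rintro _ ⟨i, j, rfl⟩
  exact single_mem_span_iterate_single hD i j

end

/-- In the free vector space with basis {u_{i,j}} and ∂u_{i,j} =
u_{i+1,j} + u_{i,j+1}, the families {u_{i,j}} and {∂^n u_{0,m}} span the same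
subspace, namely the whole space. -/
theorem stmt_2
    (D : ((ℕ × ℕ) →₀ ℂ) →ₗ[ℂ] ((ℕ × ℕ) →₀ ℂ))
    (hD : ∀ i j : ℕ, D (Finsupp.single (i, j) (1 : ℂ)) =
      Finsupp.single (i + 1, j) 1 + Finsupp.single (i, j + 1) 1) :
    Submodule.span ℂ {x | ∃ m n : ℕ, x = (⇑D)^[n] (Finsupp.single ((0 : ℕ), m) (1 : ℂ))} =
        Submodule.span ℂ {x | ∃ i j : ℕ, x = Finsupp.single (i, j) (1 : ℂ)} ∧
      Submodule.span ℂ {x | ∃ m n : ℕ, x = (⇑D)^[n] (Finsupp.single ((0 : ℕ), m) (1 : ℂ))} =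
        (⊤ : Submodule ℂ ((ℕ × ℕ) →₀ ℂ)) := by
  rw [span_iterate_single_eq_top hD, span_exists_single_one_eq_top]
  exact ⟨rfl, rfl⟩
end

section
/- Define for a positive integer n and a complex parameter ℓ the sums S = Σ_{i=1}^{4} Σ_{j=0}^{n+4} (−1)^j C^i_{n,j}, where the coefficients C^i_{n,j} are given by the explicit rational expressions: C^1_{n,0}=0, C^1_{n,1}=(3+2ℓ)(4+4ℓ+n+2ℓn)/(4(2+n)(3+n)), C^1_{n,2}=−3(3+2ℓ)/(4(n+2)), C^1_{n,3}=(3+2ℓ)/(2n+2) − (3+10ℓ+6n+4ℓn)/(12(1+n)), C^1_{n,4}=−(3+2ℓ)(5+6ℓ)/48 − (3+10ℓ+6n+4ℓn)/48, C^1_{n,j}=−(3+10ℓ+6n+4ℓn)·n!/(2·(n+4−j)!·j!) for 5 ≤ j ≤ n, C^1_{n,n+1}=−(3+10ℓ+6n+4ℓn)/(12(1+n)), C^1_{n,n+2}=−(3+10ℓ+6n+4ℓn)/(4(1+n)(2+n)), C^1_{n,n+3}=−(3+10ℓ+6n+4ℓn)/(2(1+n)(2+n)(3+n)), C^1_{n,n+4}=−3(5+2ℓ+2n)/((1+n)(2+n)(3+n)(4+n));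 C^2_{n,0}=(18−4ℓ+3n+2ℓn)/(2(1+n)(2+n)(3+n)(4+n)), C^2_{n,j}=−6·n!/((n+4−j)!·j!) for 1 ≤ j ≤ n, C^2_{n,n+1}=−1/(1+n), C^2_{n,n+2}=−3/((1+n)(2+n)), C^2_{n,n+3}=−6/((1+n)(2+n)(3+n)), C^2_{n,n+4}=−(−15−2ℓ−6n+4ℓn)/(2(1+n)(2+n)(3+n)(4+n)); C^3_{n,0}=−(18−4ℓ+3n+2ℓn)/(2(1+n)(2+n)(3+n)(4+n)), C^3_{n,1}=6/((1+n)(2+n)(3+n)), C^3_{n,2}=3/((1+n)(2+n)), C^3_{n,3}=1/(1+n), C^3_{n,4}=−5/16−ℓ/24, C^3_{n,j}=0 for 5 ≤ j ≤ n+4; C^4_{n,0}=0, C^4_{n,1}=−3(4+n)/(4(2+n)(3+n)) + ℓ(−30−10n+n²)/(6(2+n)(3+n)) − ℓ²/3, C^4_{n,2}=3(6+4ℓ−n+2ℓn)/(8(2+n)), C^4_{n,3}=−1, C^4_{n,j}=0 for 4 ≤ j ≤ n+2, C^4_{n,n+3}=−(−1)^n(3+2ℓ)/(4(3+n)), C^4_{n,n+4}=(−1)^n(45+40ℓ+12ℓ²+25n+47ℓn+22ℓ²n+14ℓn²+12ℓ²n²−n³+ℓn³+2ℓ²n³)/(2(1+n)(2+n)(3+n)(4+n)).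 Then for all n ≥ 5 and all ℓ, S = n(n+7)·ℓ·(2ℓ−1)/(24·(n+3)(n+4)). -/
open Nat

/-- The coefficients C¹_{n,j}. -/
noncomputable def C1 (n j : ℕ) (l : ℂ) : ℂ :=
  if j = 0 then 0
  else if j = 1 then (3 + 2*l) * (4 + 4*l + n + 2*l*n) / (4 * (2 + n) * (3 + n))
  else if j = 2 then -(3 * (3 + 2*l)) / (4 * (n + 2))
  else if j = 3 then (3 + 2*l) / (2*n + 2) - (3 + 10*l + 6*n + 4*l*n) / (12 * (1 + n))
  else if j = 4 then -((3 + 2*l) * (5 + 6*l)) / 48 - (3 + 10*l + 6*n + 4*l*n) / 48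
  else if j ≤ n then
    -((3 + 10*l + 6*n + 4*l*n) * (n ! : ℂ)) / (2 * ((n + 4 - j)! : ℂ) * (j ! : ℂ))
  else if j = n + 1 then -(3 + 10*l + 6*n + 4*l*n) / (12 * (1 + n))
  else if j = n + 2 then -(3 + 10*l + 6*n + 4*l*n) / (4 * (1 + n) * (2 + n))
  else if j = n + 3 then -(3 + 10*l + 6*n + 4*l*n) / (2 * (1 + n) * (2 + n) * (3 + n))
  else -(3 * (5 + 2*l + 2*n)) / ((1 + n) * (2 + n) * (3 + n) * (4 + n))

/-- The coefficients C²_{n,j}. -/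
noncomputable def C2 (n j : ℕ) (l : ℂ) : ℂ :=
  if j = 0 then (18 - 4*l + 3*n + 2*l*n) / (2 * (1 + n) * (2 + n) * (3 + n) * (4 + n))
  else if j ≤ n then -(6 * (n ! : ℂ)) / (((n + 4 - j)! : ℂ) * (j ! : ℂ))
  else if j = n + 1 then -1 / (1 + n)
  else if j = n + 2 then -3 / ((1 + n) * (2 + n))
  else if j = n + 3 then -6 / ((1 + n) * (2 + n) * (3 + n))
  else -(-15 - 2*l - 6*n + 4*l*n) / (2 * (1 + n) * (2 + n) * (3 + n) * (4 + n))

/-- The coefficients C³_{n,j}. -/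
noncomputable def C3 (n j : ℕ) (l : ℂ) : ℂ :=
  if j = 0 then -(18 - 4*l + 3*n + 2*l*n) / (2 * (1 + n) * (2 + n) * (3 + n) * (4 + n))
  else if j = 1 then 6 / ((1 + n) * (2 + n) * (3 + n))
  else if j = 2 then 3 / ((1 + n) * (2 + n))
  else if j = 3 then 1 / (1 + n)
  else if j = 4 then -5/16 - l/24
  else 0

/-- The coefficients C⁴_{n,j}. -/
noncomputable def C4 (n j : ℕ) (l : ℂ) : ℂ :=
  if j = 0 then 0
  else if j = 1 then -(3 * (4 + n)) / (4 * (2 + n) * (3 + n))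
    + l * (-30 - 10*n + n^2) / (6 * (2 + n) * (3 + n)) - l^2 / 3
  else if j = 2 then 3 * (6 + 4*l - n + 2*l*n) / (8 * (2 + n))
  else if j = 3 then -1
  else if j ≤ n + 2 then 0
  else if j = n + 3 then -((-1 : ℂ)^n * (3 + 2*l)) / (4 * (3 + n))
  else (-1 : ℂ)^n * (45 + 40*l + 12*l^2 + 25*n + 47*l*n + 22*l^2*n + 14*l*n^2
    + 12*l^2*n^2 - n^3 + l*n^3 + 2*l^2*n^3) / (2 * (1 + n) * (2 + n) * (3 + n) * (4 + n))

private lemma choose_mul_cast {m k : ℕ} (h : k ≤ m) :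
    (m.choose k : ℂ) * ((k)! : ℂ) * (((m - k))! : ℂ) = ((m)! : ℂ) := by
  exact_mod_cast congrArg (Nat.cast : ℕ → ℂ) (Nat.choose_mul_factorial_mul_factorial h)

set_option maxHeartbeats 4000000 in
/-- For all n ≥ 5 and all ℓ ∈ ℂ, the alternating sum
S = Σ_{i=1}^{4} Σ_{j=0}^{n+4} (−1)^j Cⁱ_{n,j} equals n(n+7)·ℓ·(2ℓ−1)/(24·(n+3)(n+4)). -/
theorem stmt_6 (n : ℕ) (hn : 5 ≤ n) (l : ℂ) :
    ∑ j ∈ Finset.range (n + 5),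
        (-1 : ℂ)^j * (C1 n j l + C2 n j l + C3 n j l + C4 n j l)
      = (n : ℂ) * (n + 7) * l * (2*l - 1) / (24 * (n + 3) * (n + 4)) := by
  have h1 : (n:ℂ) + 1 ≠ 0 := by
    have : ((n+1:ℕ):ℂ) ≠ 0 := Nat.cast_ne_zero.mpr (by omega)
    push_cast at this; exact this
  have h2 : (n:ℂ) + 2 ≠ 0 := by
    have : ((n+2:ℕ):ℂ) ≠ 0 := Nat.cast_ne_zero.mpr (by omega)
    push_cast at this; exact this
  have h3 : (n:ℂ) + 3 ≠ 0 := by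
    have : ((n+3:ℕ):ℂ) ≠ 0 := Nat.cast_ne_zero.mpr (by omega)
    push_cast at this; exact this
  have h4 : (n:ℂ) + 4 ≠ 0 := by
    have : ((n+4:ℕ):ℂ) ≠ 0 := Nat.cast_ne_zero.mpr (by omega)
    push_cast at this; exact this
  have hfne : ∀ m : ℕ, ((m)! : ℂ) ≠ 0 := fun m => Nat.cast_ne_zero.mpr (Nat.factorial_ne_zero m)
  -- factorial expansions
  have hf1 : (((n+1))! : ℂ) = ((n:ℂ) + 1) * ((n)! : ℂ) := by
    rw [Nat.factorial_succ]; push_cast; ring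
  have hf2 : (((n+2))! : ℂ) = ((n:ℂ) + 2) * ((n:ℂ) + 1) * ((n)! : ℂ) := by
    rw [show n+2 = (n+1)+1 from rfl, Nat.factorial_succ]; push_cast; rw [hf1]; ring
  have hf3 : (((n+3))! : ℂ) = ((n:ℂ) + 3) * ((n:ℂ) + 2) * ((n:ℂ) + 1) * ((n)! : ℂ) := by
    rw [show n+3 = (n+2)+1 from rfl, Nat.factorial_succ]; push_cast; rw [hf2]; ring
  have hf4 : (((n+4))! : ℂ) = ((n:ℂ) + 4) * ((n:ℂ) + 3) * ((n:ℂ) + 2) * ((n:ℂ) + 1) * ((n)! : ℂ) := by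
    rw [show n+4 = (n+3)+1 from rfl, Nat.factorial_succ]; push_cast; rw [hf3]; ring
  -- choose casts
  have c1 : (((n+4).choose 1 : ℕ) : ℂ) = (n:ℂ) + 4 := by
    rw [Nat.choose_one_right]; push_cast; ring
  have c2 : (((n+4).choose 2 : ℕ) : ℂ) = ((n:ℂ)+4)*((n:ℂ)+3)/2 := by
    have hc := choose_mul_cast (show 2 ≤ n+4 by omega)
    rw [show n+4-2 = n+2 from by omega, hf2, hf4, show ((2:ℕ))! = 2 from rfl] at hc
    have hc2 : ((((n+4).choose 2 : ℕ) : ℂ) * 2) * (((n:ℂ)+2)*((n:ℂ)+1)*((n)! : ℂ))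
        = (((n:ℂ)+4)*((n:ℂ)+3)) * (((n:ℂ)+2)*((n:ℂ)+1)*((n)! : ℂ)) := by
      push_cast at hc ⊢; linear_combination hc
    have hc3 := mul_right_cancel₀ (mul_ne_zero (mul_ne_zero h2 h1) (hfne n)) hc2
    rw [eq_div_iff (by norm_num : (2:ℂ) ≠ 0)]; exact hc3
  have c3 : (((n+4).choose 3 : ℕ) : ℂ) = ((n:ℂ)+4)*((n:ℂ)+3)*((n:ℂ)+2)/6 := by
    have hc := choose_mul_cast (show 3 ≤ n+4 by omega)
    rw [show n+4-3 = n+1 from by omega, hf1, hf4, show ((3:ℕ))! = 6 from rfl] at hc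
    have hc2 : ((((n+4).choose 3 : ℕ) : ℂ) * 6) * (((n:ℂ)+1)*((n)! : ℂ))
        = (((n:ℂ)+4)*((n:ℂ)+3)*((n:ℂ)+2)) * (((n:ℂ)+1)*((n)! : ℂ)) := by
      push_cast at hc ⊢; linear_combination hc
    have hc3 := mul_right_cancel₀ (mul_ne_zero h1 (hfne n)) hc2
    rw [eq_div_iff (by norm_num : (6:ℂ) ≠ 0)]; exact hc3
  have c4 : (((n+4).choose 4 : ℕ) : ℂ) = ((n:ℂ)+4)*((n:ℂ)+3)*((n:ℂ)+2)*((n:ℂ)+1)/24 := by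
    have hc := choose_mul_cast (show 4 ≤ n+4 by omega)
    rw [show n+4-4 = n from by omega, hf4, show ((4:ℕ))! = 24 from rfl] at hc
    have hc2 : ((((n+4).choose 4 : ℕ) : ℂ) * 24) * ((n)! : ℂ)
        = (((n:ℂ)+4)*((n:ℂ)+3)*((n:ℂ)+2)*((n:ℂ)+1)) * ((n)! : ℂ) := by
      push_cast at hc ⊢; linear_combination hc
    have hc3 := mul_right_cancel₀ (hfne n) hc2
    rw [eq_div_iff (by norm_num : (24:ℂ) ≠ 0)]; exact hc3
  have cs1 : (n+4).choose (n+1) = (n+4).choose 3 := by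
    rw [show n+1 = (n+4)-3 by omega, Nat.choose_symm (by omega)]
  have cs2 : (n+4).choose (n+2) = (n+4).choose 2 := by
    rw [show n+2 = (n+4)-2 by omega, Nat.choose_symm (by omega)]
  have cs3 : (n+4).choose (n+3) = (n+4).choose 1 := by
    rw [show n+3 = (n+4)-1 by omega, Nat.choose_symm (by omega)]
  -- the alternating binomial sum identity
  have halt : ∑ j ∈ Finset.range (n+5), (-1:ℂ)^j * (((n+4).choose j : ℕ) : ℂ) = 0 := by
    have h := Int.alternating_sum_range_choose_of_ne (show n+4 ≠ 0 by omega)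
    have h2 := congrArg (Int.cast : ℤ → ℂ) h
    push_cast at h2
    rw [show n+5 = (n+4)+1 from rfl]
    convert h2 using 2
  -- generic splitting of a sum over range (n+5)
  have split : ∀ f : ℕ → ℂ, ∑ j ∈ Finset.range (n+5), f j
      = (∑ j ∈ Finset.range 5, f j) + (∑ j ∈ Finset.Ico 5 (n+1), f j)
        + (∑ j ∈ Finset.Ico (n+1) (n+5), f j) := by
    intro f
    rw [Finset.range_eq_Ico,
      ← Finset.sum_Ico_consecutive f (show 0 ≤ n+1 by omega) (show n+1 ≤ n+5 by omega),
      ← Finset.sum_Ico_consecutive f (show 0 ≤ 5 by omega) (show 5 ≤ n+1 by omega),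
      ← Finset.range_eq_Ico]
  -- middle sum of the main expression
  have hmid : ∀ j ∈ Finset.Ico 5 (n+1),
      ((-1:ℂ)^j * (C1 n j l + C2 n j l + C3 n j l + C4 n j l))
          * (((n:ℂ)+1)*((n:ℂ)+2)*((n:ℂ)+3)*((n:ℂ)+4))
        = (-(3 + 10*l + 6*(n:ℂ) + 4*l*(n:ℂ)) - 12)/2
            * ((-1:ℂ)^j * (((n+4).choose j : ℕ) : ℂ)) := by
    intro j hj
    rw [Finset.mem_Ico] at hj
    have e1 : C1 n j l = -((3 + 10*l + 6*(n:ℂ) + 4*l*(n:ℂ)) * ((n)! : ℂ))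
        / (2 * (((n + 4 - j))! : ℂ) * ((j)! : ℂ)) := by
      simp only [C1]
      rw [if_neg (by omega : ¬ j = 0), if_neg (by omega : ¬ j = 1), if_neg (by omega : ¬ j = 2),
        if_neg (by omega : ¬ j = 3), if_neg (by omega : ¬ j = 4), if_pos (by omega : j ≤ n)]
    have e2 : C2 n j l = -(6 * ((n)! : ℂ)) / ((((n + 4 - j))! : ℂ) * ((j)! : ℂ)) := by
      simp only [C2]; rw [if_neg (by omega : ¬ j = 0), if_pos (by omega : j ≤ n)]
    have e3 : C3 n j l = 0 := by
      simp only [C3]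
      rw [if_neg (by omega : ¬ j = 0), if_neg (by omega : ¬ j = 1), if_neg (by omega : ¬ j = 2),
        if_neg (by omega : ¬ j = 3), if_neg (by omega : ¬ j = 4)]
    have e4 : C4 n j l = 0 := by
      simp only [C4]
      rw [if_neg (by omega : ¬ j = 0), if_neg (by omega : ¬ j = 1), if_neg (by omega : ¬ j = 2),
        if_neg (by omega : ¬ j = 3), if_pos (by omega : j ≤ n+2)]
    have hprod : (((n+4).choose j : ℕ):ℂ) * (((j))! : ℂ) * ((((n + 4 - j)))! : ℂ)
        = (((n:ℂ)+4)*((n:ℂ)+3)*((n:ℂ)+2)*((n:ℂ)+1)) * ((n)! : ℂ) := by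
      have hh := choose_mul_cast (show j ≤ n+4 by omega)
      rw [hf4] at hh; linear_combination hh
    have hfj : ((j)! : ℂ) ≠ 0 := hfne j
    have hfd : (((n + 4 - j))! : ℂ) ≠ 0 := hfne _
    have hch : (((n+4).choose j : ℕ):ℂ)
        = (((n:ℂ)+4)*((n:ℂ)+3)*((n:ℂ)+2)*((n:ℂ)+1)) * ((n)! : ℂ)
          / (((j)! : ℂ) * (((n + 4 - j))! : ℂ)) := by
      rw [eq_div_iff (mul_ne_zero hfj hfd)]; linear_combination hprod
    rw [e1, e2, e3, e4, hch]
    field_simp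
    ring
  have hP : (((n:ℂ)+1)*((n:ℂ)+2)*((n:ℂ)+3)*((n:ℂ)+4)) ≠ 0 :=
    mul_ne_zero (mul_ne_zero (mul_ne_zero h1 h2) h3) h4
  have hfn : ((n)! : ℂ) ≠ 0 := hfne n
  have h1' : (1 + (n:ℂ)) ≠ 0 := by intro h; exact h1 (by linear_combination h)
  have h2' : (2 + (n:ℂ)) ≠ 0 := by intro h; exact h2 (by linear_combination h)
  have h3' : (3 + (n:ℂ)) ≠ 0 := by intro h; exact h3 (by linear_combination h)
  have h4' : (4 + (n:ℂ)) ≠ 0 := by intro h; exact h4 (by linear_combination h)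
  have h2x : (2*(n:ℂ) + 2) ≠ 0 := by intro h; exact h1 (by linear_combination h/2)
  have hD : (48*(1 + (n:ℂ))*(2 + (n:ℂ))*(3 + (n:ℂ))*(4 + (n:ℂ))) ≠ 0 :=
    mul_ne_zero (mul_ne_zero (mul_ne_zero (mul_ne_zero (by norm_num) h1') h2') h3') h4'
  -- power lemmas
  have p1 : (-1:ℂ)^(n+1) = -(-1:ℂ)^n := by rw [pow_succ]; ring
  have p2 : (-1:ℂ)^(n+2) = (-1:ℂ)^n := by rw [pow_add]; norm_num
  have p3 : (-1:ℂ)^(n+3) = -(-1:ℂ)^n := by rw [pow_add]; norm_num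
  have p4 : (-1:ℂ)^(n+4) = (-1:ℂ)^n := by rw [pow_add]; norm_num
  -- value of the middle binomial sum
  have hM : ∑ j ∈ Finset.Ico 5 (n+1), (-1:ℂ)^j * (((n+4).choose j : ℕ):ℂ)
      = -(1 - ((n:ℂ)+4) + ((n:ℂ)+4)*((n:ℂ)+3)/2 - ((n:ℂ)+4)*((n:ℂ)+3)*((n:ℂ)+2)/6
          + ((n:ℂ)+4)*((n:ℂ)+3)*((n:ℂ)+2)*((n:ℂ)+1)/24)
        - (-1:ℂ)^n * (-(((n:ℂ)+4)*((n:ℂ)+3)*((n:ℂ)+2)/6) + ((n:ℂ)+4)*((n:ℂ)+3)/2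
          - (((n:ℂ)+4)) + 1) := by
    have hhg : ∑ j ∈ Finset.range 5, (-1:ℂ)^j * (((n+4).choose j : ℕ):ℂ)
        = 1 - ((n:ℂ)+4) + ((n:ℂ)+4)*((n:ℂ)+3)/2 - ((n:ℂ)+4)*((n:ℂ)+3)*((n:ℂ)+2)/6
          + ((n:ℂ)+4)*((n:ℂ)+3)*((n:ℂ)+2)*((n:ℂ)+1)/24 := by
      simp only [Finset.sum_range_succ, Finset.sum_range_zero]
      rw [Nat.choose_zero_right, c1, c2, c3, c4]
      norm_num
      ring
    have htg : ∑ j ∈ Finset.Ico (n+1) (n+5), (-1:ℂ)^j * (((n+4).choose j : ℕ):ℂ)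
        = (-1:ℂ)^n * (-(((n:ℂ)+4)*((n:ℂ)+3)*((n:ℂ)+2)/6) + ((n:ℂ)+4)*((n:ℂ)+3)/2
          - (((n:ℂ)+4)) + 1) := by
      rw [Finset.sum_Ico_eq_sum_range, show n+5-(n+1) = 4 by omega]
      simp only [Finset.sum_range_succ, Finset.sum_range_zero]
      rw [show n+1+0 = n+1 by omega, show n+1+1 = n+2 by omega, show n+1+2 = n+3 by omega,
        show n+1+3 = n+4 by omega]
      rw [cs1, cs2, cs3, Nat.choose_self, c1, c2, c3, p1, p2, p3, p4]
      push_cast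
      ring
    have hs := (split (fun j => (-1:ℂ)^j * (((n+4).choose j : ℕ):ℂ))).symm.trans halt
    rw [hhg, htg] at hs
    linear_combination hs
  -- middle sum of the main expression, in terms of the binomial sum
  have hmid2 : ∑ j ∈ Finset.Ico 5 (n+1),
        (-1:ℂ)^j * (C1 n j l + C2 n j l + C3 n j l + C4 n j l)
      = (-(3 + 10*l + 6*(n:ℂ) + 4*l*(n:ℂ)) - 12)/2
          * (∑ j ∈ Finset.Ico 5 (n+1), (-1:ℂ)^j * (((n+4).choose j : ℕ):ℂ))
          / (((n:ℂ)+1)*((n:ℂ)+2)*((n:ℂ)+3)*((n:ℂ)+4)) := by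
    rw [eq_div_iff hP, Finset.sum_mul, Finset.mul_sum]
    exact Finset.sum_congr rfl hmid
  -- head coefficient values
  have a0 : C1 n 0 l = 0 := by simp [C1]
  have b0 : C2 n 0 l = (18 - 4*l + 3*(n:ℂ) + 2*l*(n:ℂ))
      / (2 * (1 + (n:ℂ)) * (2 + (n:ℂ)) * (3 + (n:ℂ)) * (4 + (n:ℂ))) := by
    simp only [C2, reduceIte]
  have g0 : C3 n 0 l = -(18 - 4*l + 3*(n:ℂ) + 2*l*(n:ℂ))
      / (2 * (1 + (n:ℂ)) * (2 + (n:ℂ)) * (3 + (n:ℂ)) * (4 + (n:ℂ))) := by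
    simp only [C3, reduceIte]
  have d0 : C4 n 0 l = 0 := by simp [C4]
  have a1 : C1 n 1 l = (3 + 2*l) * (4 + 4*l + (n:ℂ) + 2*l*(n:ℂ))
      / (4 * (2 + (n:ℂ)) * (3 + (n:ℂ))) := by
    simp only [C1]
    rw [if_neg (by omega : ¬ (1:ℕ) = 0), if_pos trivial]
  have b1 : C2 n 1 l = -6 / ((1 + (n:ℂ)) * (2 + (n:ℂ)) * (3 + (n:ℂ))) := by
    simp only [C2]
    rw [if_neg (by omega : ¬ (1:ℕ) = 0), if_pos (by omega : 1 ≤ n), show n+4-1 = n+3 by omega, hf3,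
      show ((1:ℕ))! = 1 from rfl]
    push_cast
    rw [div_eq_div_iff (by
        refine mul_ne_zero (mul_ne_zero (mul_ne_zero (mul_ne_zero ?_ ?_) ?_) hfn) one_ne_zero
        · intro h; exact h3 (by linear_combination h)
        · intro h; exact h2 (by linear_combination h)
        · intro h; exact h1 (by linear_combination h))
      (by
        refine mul_ne_zero (mul_ne_zero ?_ ?_) ?_
        · intro h; exact h1 (by linear_combination h)
        · intro h; exact h2 (by linear_combination h)
        · intro h; exact h3 (by linear_combination h))]
    ring
  have g1 : C3 n 1 l = 6 / ((1 + (n:ℂ)) * (2 + (n:ℂ)) * (3 + (n:ℂ))) := by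
    simp only [C3]
    rw [if_neg (by omega : ¬ (1:ℕ) = 0), if_pos trivial]
  have d1 : C4 n 1 l = -(3 * (4 + (n:ℂ))) / (4 * (2 + (n:ℂ)) * (3 + (n:ℂ)))
      + l * (-30 - 10*(n:ℂ) + (n:ℂ)^2) / (6 * (2 + (n:ℂ)) * (3 + (n:ℂ))) - l^2 / 3 := by
    simp only [C4]
    rw [if_neg (by omega : ¬ (1:ℕ) = 0), if_pos trivial]
  have a2 : C1 n 2 l = -(3 * (3 + 2*l)) / (4 * ((n:ℂ) + 2)) := by
    simp only [C1]
    rw [if_neg (by omega : ¬ (2:ℕ) = 0), if_neg (by omega : ¬ (2:ℕ) = 1), if_pos trivial]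
  have b2 : C2 n 2 l = -3 / ((1 + (n:ℂ)) * (2 + (n:ℂ))) := by
    simp only [C2]
    rw [if_neg (by omega : ¬ (2:ℕ) = 0), if_pos (by omega : 2 ≤ n), show n+4-2 = n+2 by omega, hf2,
      show ((2:ℕ))! = 2 from rfl]
    push_cast
    rw [div_eq_div_iff (by
        refine mul_ne_zero (mul_ne_zero (mul_ne_zero ?_ ?_) hfn) two_ne_zero
        · intro h; exact h2 (by linear_combination h)
        · intro h; exact h1 (by linear_combination h))
      (by
        refine mul_ne_zero ?_ ?_
        · intro h; exact h1 (by linear_combination h)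
        · intro h; exact h2 (by linear_combination h))]
    ring
  have g2 : C3 n 2 l = 3 / ((1 + (n:ℂ)) * (2 + (n:ℂ))) := by
    simp only [C3]
    rw [if_neg (by omega : ¬ (2:ℕ) = 0), if_neg (by omega : ¬ (2:ℕ) = 1), if_pos trivial]
  have d2 : C4 n 2 l = 3 * (6 + 4*l - (n:ℂ) + 2*l*(n:ℂ)) / (8 * (2 + (n:ℂ))) := by
    simp only [C4]
    rw [if_neg (by omega : ¬ (2:ℕ) = 0), if_neg (by omega : ¬ (2:ℕ) = 1), if_pos trivial]
  have a3 : C1 n 3 l = (3 + 2*l) / (2*(n:ℂ) + 2)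
      - (3 + 10*l + 6*(n:ℂ) + 4*l*(n:ℂ)) / (12 * (1 + (n:ℂ))) := by
    simp only [C1]
    rw [if_neg (by omega : ¬ (3:ℕ) = 0), if_neg (by omega : ¬ (3:ℕ) = 1),
      if_neg (by omega : ¬ (3:ℕ) = 2), if_pos trivial]
  have b3 : C2 n 3 l = -1 / (1 + (n:ℂ)) := by
    simp only [C2]
    rw [if_neg (by omega : ¬ (3:ℕ) = 0), if_pos (by omega : 3 ≤ n), show n+4-3 = n+1 by omega, hf1,
      show ((3:ℕ))! = 6 from rfl]
    push_cast
    rw [div_eq_div_iff (by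
        refine mul_ne_zero (mul_ne_zero ?_ hfn) (by norm_num : (6:ℂ) ≠ 0)
        intro h; exact h1 (by linear_combination h))
      (by intro h; exact h1 (by linear_combination h))]
    ring
  have g3 : C3 n 3 l = 1 / (1 + (n:ℂ)) := by
    simp only [C3]
    rw [if_neg (by omega : ¬ (3:ℕ) = 0), if_neg (by omega : ¬ (3:ℕ) = 1),
      if_neg (by omega : ¬ (3:ℕ) = 2), if_pos trivial]
  have d3 : C4 n 3 l = -(48*(1 + (n:ℂ))*(2 + (n:ℂ))*(3 + (n:ℂ))*(4 + (n:ℂ)))/(48*(1 + (n:ℂ))*(2 + (n:ℂ))*(3 + (n:ℂ))*(4 + (n:ℂ))) := by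
    rw [neg_div, div_self hD]
    simp only [C4]
    rw [if_neg (by omega : ¬ (3:ℕ) = 0), if_neg (by omega : ¬ (3:ℕ) = 1),
      if_neg (by omega : ¬ (3:ℕ) = 2), if_pos trivial]
  have a4 : C1 n 4 l = -((3 + 2*l) * (5 + 6*l)) / 48
      - (3 + 10*l + 6*(n:ℂ) + 4*l*(n:ℂ)) / 48 := by
    simp only [C1]
    rw [if_neg (by omega : ¬ (4:ℕ) = 0), if_neg (by omega : ¬ (4:ℕ) = 1),
      if_neg (by omega : ¬ (4:ℕ) = 2), if_neg (by omega : ¬ (4:ℕ) = 3), if_pos trivial]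
  have b4 : C2 n 4 l = -(1/4) := by
    simp only [C2]
    rw [if_neg (by omega : ¬ (4:ℕ) = 0), if_pos (by omega : 4 ≤ n), show n+4-4 = n by omega,
      show ((4:ℕ))! = 24 from rfl]
    push_cast
    rw [div_eq_iff (mul_ne_zero hfn (by norm_num : (24:ℂ) ≠ 0))]
    ring
  have g4 : C3 n 4 l = -5/16 - l/24 := by
    simp only [C3]
    rw [if_neg (by omega : ¬ (4:ℕ) = 0), if_neg (by omega : ¬ (4:ℕ) = 1),
      if_neg (by omega : ¬ (4:ℕ) = 2), if_neg (by omega : ¬ (4:ℕ) = 3), if_pos trivial]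
  have d4 : C4 n 4 l = 0 := by
    simp only [C4]
    rw [if_neg (by omega : ¬ (4:ℕ) = 0), if_neg (by omega : ¬ (4:ℕ) = 1),
      if_neg (by omega : ¬ (4:ℕ) = 2), if_neg (by omega : ¬ (4:ℕ) = 3),
      if_pos (by omega : 4 ≤ n + 2)]
  -- tail coefficient values
  have at1 : C1 n (n+1) l = -(3 + 10*l + 6*(n:ℂ) + 4*l*(n:ℂ)) / (12 * (1 + (n:ℂ))) := by
    simp only [C1]
    rw [if_neg (by omega : ¬ n+1 = 0), if_neg (by omega : ¬ n+1 = 1),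
      if_neg (by omega : ¬ n+1 = 2), if_neg (by omega : ¬ n+1 = 3),
      if_neg (by omega : ¬ n+1 = 4), if_neg (by omega : ¬ n+1 ≤ n), if_pos trivial]
  have bt1 : C2 n (n+1) l = -1 / (1 + (n:ℂ)) := by
    simp only [C2]
    rw [if_neg (by omega : ¬ n+1 = 0), if_neg (by omega : ¬ n+1 ≤ n), if_pos trivial]
  have gt1 : C3 n (n+1) l = 0 := by
    simp only [C3]
    rw [if_neg (by omega : ¬ n+1 = 0), if_neg (by omega : ¬ n+1 = 1),
      if_neg (by omega : ¬ n+1 = 2), if_neg (by omega : ¬ n+1 = 3),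
      if_neg (by omega : ¬ n+1 = 4)]
  have dt1 : C4 n (n+1) l = 0 := by
    simp only [C4]
    rw [if_neg (by omega : ¬ n+1 = 0), if_neg (by omega : ¬ n+1 = 1),
      if_neg (by omega : ¬ n+1 = 2), if_neg (by omega : ¬ n+1 = 3),
      if_pos (by omega : n+1 ≤ n+2)]
  have at2 : C1 n (n+2) l = -(3 + 10*l + 6*(n:ℂ) + 4*l*(n:ℂ))
      / (4 * (1 + (n:ℂ)) * (2 + (n:ℂ))) := by
    simp only [C1]
    rw [if_neg (by omega : ¬ n+2 = 0), if_neg (by omega : ¬ n+2 = 1),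
      if_neg (by omega : ¬ n+2 = 2), if_neg (by omega : ¬ n+2 = 3),
      if_neg (by omega : ¬ n+2 = 4), if_neg (by omega : ¬ n+2 ≤ n),
      if_neg (by omega : ¬ n+2 = n+1), if_pos trivial]
  have bt2 : C2 n (n+2) l = -3 / ((1 + (n:ℂ)) * (2 + (n:ℂ))) := by
    simp only [C2]
    rw [if_neg (by omega : ¬ n+2 = 0), if_neg (by omega : ¬ n+2 ≤ n),
      if_neg (by omega : ¬ n+2 = n+1), if_pos trivial]
  have gt2 : C3 n (n+2) l = 0 := by
    simp only [C3]
    rw [if_neg (by omega : ¬ n+2 = 0), if_neg (by omega : ¬ n+2 = 1),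
      if_neg (by omega : ¬ n+2 = 2), if_neg (by omega : ¬ n+2 = 3),
      if_neg (by omega : ¬ n+2 = 4)]
  have dt2 : C4 n (n+2) l = 0 := by
    simp only [C4]
    rw [if_neg (by omega : ¬ n+2 = 0), if_neg (by omega : ¬ n+2 = 1),
      if_neg (by omega : ¬ n+2 = 2), if_neg (by omega : ¬ n+2 = 3),
      if_pos (by omega : n+2 ≤ n+2)]
  have at3 : C1 n (n+3) l = -(3 + 10*l + 6*(n:ℂ) + 4*l*(n:ℂ))
      / (2 * (1 + (n:ℂ)) * (2 + (n:ℂ)) * (3 + (n:ℂ))) := by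
    simp only [C1]
    rw [if_neg (by omega : ¬ n+3 = 0), if_neg (by omega : ¬ n+3 = 1),
      if_neg (by omega : ¬ n+3 = 2), if_neg (by omega : ¬ n+3 = 3),
      if_neg (by omega : ¬ n+3 = 4), if_neg (by omega : ¬ n+3 ≤ n),
      if_neg (by omega : ¬ n+3 = n+1), if_neg (by omega : ¬ n+3 = n+2), if_pos trivial]
  have bt3 : C2 n (n+3) l = -6 / ((1 + (n:ℂ)) * (2 + (n:ℂ)) * (3 + (n:ℂ))) := by
    simp only [C2]
    rw [if_neg (by omega : ¬ n+3 = 0), if_neg (by omega : ¬ n+3 ≤ n),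
      if_neg (by omega : ¬ n+3 = n+1), if_neg (by omega : ¬ n+3 = n+2), if_pos trivial]
  have gt3 : C3 n (n+3) l = 0 := by
    simp only [C3]
    rw [if_neg (by omega : ¬ n+3 = 0), if_neg (by omega : ¬ n+3 = 1),
      if_neg (by omega : ¬ n+3 = 2), if_neg (by omega : ¬ n+3 = 3),
      if_neg (by omega : ¬ n+3 = 4)]
  have dt3 : C4 n (n+3) l = -((-1:ℂ)^n * (3 + 2*l)) / (4 * (3 + (n:ℂ))) := by
    simp only [C4]
    rw [if_neg (by omega : ¬ n+3 = 0), if_neg (by omega : ¬ n+3 = 1),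
      if_neg (by omega : ¬ n+3 = 2), if_neg (by omega : ¬ n+3 = 3),
      if_neg (by omega : ¬ n+3 ≤ n+2), if_pos trivial]
  have at4 : C1 n (n+4) l = -(3 * (5 + 2*l + 2*(n:ℂ)))
      / ((1 + (n:ℂ)) * (2 + (n:ℂ)) * (3 + (n:ℂ)) * (4 + (n:ℂ))) := by
    simp only [C1]
    rw [if_neg (by omega : ¬ n+4 = 0), if_neg (by omega : ¬ n+4 = 1),
      if_neg (by omega : ¬ n+4 = 2), if_neg (by omega : ¬ n+4 = 3),
      if_neg (by omega : ¬ n+4 = 4), if_neg (by omega : ¬ n+4 ≤ n),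
      if_neg (by omega : ¬ n+4 = n+1), if_neg (by omega : ¬ n+4 = n+2),
      if_neg (by omega : ¬ n+4 = n+3)]
  have bt4 : C2 n (n+4) l = -(-15 - 2*l - 6*(n:ℂ) + 4*l*(n:ℂ))
      / (2 * (1 + (n:ℂ)) * (2 + (n:ℂ)) * (3 + (n:ℂ)) * (4 + (n:ℂ))) := by
    simp only [C2]
    rw [if_neg (by omega : ¬ n+4 = 0), if_neg (by omega : ¬ n+4 ≤ n),
      if_neg (by omega : ¬ n+4 = n+1), if_neg (by omega : ¬ n+4 = n+2),
      if_neg (by omega : ¬ n+4 = n+3)]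
  have gt4 : C3 n (n+4) l = 0 := by
    simp only [C3]
    rw [if_neg (by omega : ¬ n+4 = 0), if_neg (by omega : ¬ n+4 = 1),
      if_neg (by omega : ¬ n+4 = 2), if_neg (by omega : ¬ n+4 = 3),
      if_neg (by omega : ¬ n+4 = 4)]
  have dt4 : C4 n (n+4) l = (-1:ℂ)^n * (45 + 40*l + 12*l^2 + 25*(n:ℂ) + 47*l*(n:ℂ)
      + 22*l^2*(n:ℂ) + 14*l*(n:ℂ)^2 + 12*l^2*(n:ℂ)^2 - (n:ℂ)^3 + l*(n:ℂ)^3 + 2*l^2*(n:ℂ)^3)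
      / (2 * (1 + (n:ℂ)) * (2 + (n:ℂ)) * (3 + (n:ℂ)) * (4 + (n:ℂ))) := by
    simp only [C4]
    rw [if_neg (by omega : ¬ n+4 = 0), if_neg (by omega : ¬ n+4 = 1),
      if_neg (by omega : ¬ n+4 = 2), if_neg (by omega : ¬ n+4 = 3),
      if_neg (by omega : ¬ n+4 ≤ n+2), if_neg (by omega : ¬ n+4 = n+3)]
  have cv0 : (18 - 4*l + 3*(n:ℂ) + 2*l*(n:ℂ)) / (2 * (1 + (n:ℂ)) * (2 + (n:ℂ)) * (3 + (n:ℂ)) * (4 + (n:ℂ))) = ((18 - 4*l + 3*(n:ℂ) + 2*l*(n:ℂ)) * 24) / (48*(1 + (n:ℂ))*(2 + (n:ℂ))*(3 + (n:ℂ))*(4 + (n:ℂ))) := by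
    rw [div_eq_div_iff (mul_ne_zero (mul_ne_zero (mul_ne_zero (mul_ne_zero ((by norm_num)) (h1')) (h2')) (h3')) (h4')) hD]; ring
  have cv1 : (-(18 - 4*l + 3*(n:ℂ) + 2*l*(n:ℂ))) / (2 * (1 + (n:ℂ)) * (2 + (n:ℂ)) * (3 + (n:ℂ)) * (4 + (n:ℂ))) = ((-(18 - 4*l + 3*(n:ℂ) + 2*l*(n:ℂ))) * 24) / (48*(1 + (n:ℂ))*(2 + (n:ℂ))*(3 + (n:ℂ))*(4 + (n:ℂ))) := by
    rw [div_eq_div_iff (mul_ne_zero (mul_ne_zero (mul_ne_zero (mul_ne_zero ((by norm_num)) (h1')) (h2')) (h3')) (h4')) hD]; ring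
  have cv2 : ((3 + 2*l) * (4 + 4*l + (n:ℂ) + 2*l*(n:ℂ))) / (4 * (2 + (n:ℂ)) * (3 + (n:ℂ))) = (((3 + 2*l) * (4 + 4*l + (n:ℂ) + 2*l*(n:ℂ))) * (12*(1 + (n:ℂ))*(4 + (n:ℂ)))) / (48*(1 + (n:ℂ))*(2 + (n:ℂ))*(3 + (n:ℂ))*(4 + (n:ℂ))) := by
    rw [div_eq_div_iff (mul_ne_zero (mul_ne_zero ((by norm_num)) (h2')) (h3')) hD]; ring
  have cv3 : (-6) / ((1 + (n:ℂ)) * (2 + (n:ℂ)) * (3 + (n:ℂ))) = ((-6) * (48*(4 + (n:ℂ)))) / (48*(1 + (n:ℂ))*(2 + (n:ℂ))*(3 + (n:ℂ))*(4 + (n:ℂ))) := by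
    rw [div_eq_div_iff (mul_ne_zero (mul_ne_zero h1' h2') (h3')) hD]; ring
  have cv4 : (6:ℂ) / ((1 + (n:ℂ)) * (2 + (n:ℂ)) * (3 + (n:ℂ))) = ((6:ℂ) * (48*(4 + (n:ℂ)))) / (48*(1 + (n:ℂ))*(2 + (n:ℂ))*(3 + (n:ℂ))*(4 + (n:ℂ))) := by
    rw [div_eq_div_iff (mul_ne_zero (mul_ne_zero h1' h2') (h3')) hD]; ring
  have cv5 : (-(3 * (4 + (n:ℂ)))) / (4 * (2 + (n:ℂ)) * (3 + (n:ℂ))) = ((-(3 * (4 + (n:ℂ)))) * (12*(1 + (n:ℂ))*(4 + (n:ℂ)))) / (48*(1 + (n:ℂ))*(2 + (n:ℂ))*(3 + (n:ℂ))*(4 + (n:ℂ))) := by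
    rw [div_eq_div_iff (mul_ne_zero (mul_ne_zero ((by norm_num)) (h2')) (h3')) hD]; ring
  have cv6 : (l * (-30 - 10*(n:ℂ) + (n:ℂ)^2)) / (6 * (2 + (n:ℂ)) * (3 + (n:ℂ))) = ((l * (-30 - 10*(n:ℂ) + (n:ℂ)^2)) * (8*(1 + (n:ℂ))*(4 + (n:ℂ)))) / (48*(1 + (n:ℂ))*(2 + (n:ℂ))*(3 + (n:ℂ))*(4 + (n:ℂ))) := by
    rw [div_eq_div_iff (mul_ne_zero (mul_ne_zero ((by norm_num)) (h2')) (h3')) hD]; ring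
  have cv7 : (l^2) / (3:ℂ) = ((l^2) * (16*(1 + (n:ℂ))*(2 + (n:ℂ))*(3 + (n:ℂ))*(4 + (n:ℂ)))) / (48*(1 + (n:ℂ))*(2 + (n:ℂ))*(3 + (n:ℂ))*(4 + (n:ℂ))) := by
    rw [div_eq_div_iff ((by norm_num)) hD]; ring
  have cv8 : (-(3 * (3 + 2*l))) / (4 * ((n:ℂ) + 2)) = ((-(3 * (3 + 2*l))) * (12*(1 + (n:ℂ))*(3 + (n:ℂ))*(4 + (n:ℂ)))) / (48*(1 + (n:ℂ))*(2 + (n:ℂ))*(3 + (n:ℂ))*(4 + (n:ℂ))) := by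
    rw [div_eq_div_iff (mul_ne_zero ((by norm_num)) (h2)) hD]; ring
  have cv9 : (-3) / ((1 + (n:ℂ)) * (2 + (n:ℂ))) = ((-3) * (48*(3 + (n:ℂ))*(4 + (n:ℂ)))) / (48*(1 + (n:ℂ))*(2 + (n:ℂ))*(3 + (n:ℂ))*(4 + (n:ℂ))) := by
    rw [div_eq_div_iff (mul_ne_zero h1' h2') hD]; ring
  have cv10 : (3:ℂ) / ((1 + (n:ℂ)) * (2 + (n:ℂ))) = ((3:ℂ) * (48*(3 + (n:ℂ))*(4 + (n:ℂ)))) / (48*(1 + (n:ℂ))*(2 + (n:ℂ))*(3 + (n:ℂ))*(4 + (n:ℂ))) := by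
    rw [div_eq_div_iff (mul_ne_zero h1' h2') hD]; ring
  have cv11 : (3 * (6 + 4*l - (n:ℂ) + 2*l*(n:ℂ))) / (8 * (2 + (n:ℂ))) = ((3 * (6 + 4*l - (n:ℂ) + 2*l*(n:ℂ))) * (6*(1 + (n:ℂ))*(3 + (n:ℂ))*(4 + (n:ℂ)))) / (48*(1 + (n:ℂ))*(2 + (n:ℂ))*(3 + (n:ℂ))*(4 + (n:ℂ))) := by
    rw [div_eq_div_iff (mul_ne_zero ((by norm_num)) (h2')) hD]; ring
  have cv12 : (3 + 2*l) / (2*(n:ℂ) + 2) = ((3 + 2*l) * (24*(2 + (n:ℂ))*(3 + (n:ℂ))*(4 + (n:ℂ)))) / (48*(1 + (n:ℂ))*(2 + (n:ℂ))*(3 + (n:ℂ))*(4 + (n:ℂ))) := by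
    rw [div_eq_div_iff (h2x) hD]; ring
  have cv13 : (3 + 10*l + 6*(n:ℂ) + 4*l*(n:ℂ)) / (12 * (1 + (n:ℂ))) = ((3 + 10*l + 6*(n:ℂ) + 4*l*(n:ℂ)) * (4*(2 + (n:ℂ))*(3 + (n:ℂ))*(4 + (n:ℂ)))) / (48*(1 + (n:ℂ))*(2 + (n:ℂ))*(3 + (n:ℂ))*(4 + (n:ℂ))) := by
    rw [div_eq_div_iff (mul_ne_zero ((by norm_num)) (h1')) hD]; ring
  have cv14 : (-1) / (1 + (n:ℂ)) = ((-1) * (48*(2 + (n:ℂ))*(3 + (n:ℂ))*(4 + (n:ℂ)))) / (48*(1 + (n:ℂ))*(2 + (n:ℂ))*(3 + (n:ℂ))*(4 + (n:ℂ))) := by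
    rw [div_eq_div_iff (h1') hD]; ring
  have cv15 : (1:ℂ) / (1 + (n:ℂ)) = ((1:ℂ) * (48*(2 + (n:ℂ))*(3 + (n:ℂ))*(4 + (n:ℂ)))) / (48*(1 + (n:ℂ))*(2 + (n:ℂ))*(3 + (n:ℂ))*(4 + (n:ℂ))) := by
    rw [div_eq_div_iff (h1') hD]; ring
  have cv16 : (-((3 + 2*l) * (5 + 6*l))) / (48:ℂ) = ((-((3 + 2*l) * (5 + 6*l))) * ((1 + (n:ℂ))*(2 + (n:ℂ))*(3 + (n:ℂ))*(4 + (n:ℂ)))) / (48*(1 + (n:ℂ))*(2 + (n:ℂ))*(3 + (n:ℂ))*(4 + (n:ℂ))) := by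
    rw [div_eq_div_iff ((by norm_num)) hD]; ring
  have cv17 : (3 + 10*l + 6*(n:ℂ) + 4*l*(n:ℂ)) / (48:ℂ) = ((3 + 10*l + 6*(n:ℂ) + 4*l*(n:ℂ)) * ((1 + (n:ℂ))*(2 + (n:ℂ))*(3 + (n:ℂ))*(4 + (n:ℂ)))) / (48*(1 + (n:ℂ))*(2 + (n:ℂ))*(3 + (n:ℂ))*(4 + (n:ℂ))) := by
    rw [div_eq_div_iff ((by norm_num)) hD]; ring
  have cv18 : (1:ℂ) / (4:ℂ) = ((1:ℂ) * (12*(1 + (n:ℂ))*(2 + (n:ℂ))*(3 + (n:ℂ))*(4 + (n:ℂ)))) / (48*(1 + (n:ℂ))*(2 + (n:ℂ))*(3 + (n:ℂ))*(4 + (n:ℂ))) := by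
    rw [div_eq_div_iff ((by norm_num)) hD]; ring
  have cv19 : (-5) / (16:ℂ) = ((-5) * (3*(1 + (n:ℂ))*(2 + (n:ℂ))*(3 + (n:ℂ))*(4 + (n:ℂ)))) / (48*(1 + (n:ℂ))*(2 + (n:ℂ))*(3 + (n:ℂ))*(4 + (n:ℂ))) := by
    rw [div_eq_div_iff ((by norm_num)) hD]; ring
  have cv20 : (5:ℂ) / (16:ℂ) = ((5:ℂ) * (3*(1 + (n:ℂ))*(2 + (n:ℂ))*(3 + (n:ℂ))*(4 + (n:ℂ)))) / (48*(1 + (n:ℂ))*(2 + (n:ℂ))*(3 + (n:ℂ))*(4 + (n:ℂ))) := by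
    rw [div_eq_div_iff ((by norm_num)) hD]; ring
  have cv21 : l / (24:ℂ) = (l * (2*(1 + (n:ℂ))*(2 + (n:ℂ))*(3 + (n:ℂ))*(4 + (n:ℂ)))) / (48*(1 + (n:ℂ))*(2 + (n:ℂ))*(3 + (n:ℂ))*(4 + (n:ℂ))) := by
    rw [div_eq_div_iff ((by norm_num)) hD]; ring
  have cv22 : (-(3 + 10*l + 6*(n:ℂ) + 4*l*(n:ℂ))) / (12 * (1 + (n:ℂ))) = ((-(3 + 10*l + 6*(n:ℂ) + 4*l*(n:ℂ))) * (4*(2 + (n:ℂ))*(3 + (n:ℂ))*(4 + (n:ℂ)))) / (48*(1 + (n:ℂ))*(2 + (n:ℂ))*(3 + (n:ℂ))*(4 + (n:ℂ))) := by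
    rw [div_eq_div_iff (mul_ne_zero ((by norm_num)) (h1')) hD]; ring
  have cv23 : (-(3 + 10*l + 6*(n:ℂ) + 4*l*(n:ℂ))) / (4 * (1 + (n:ℂ)) * (2 + (n:ℂ))) = ((-(3 + 10*l + 6*(n:ℂ) + 4*l*(n:ℂ))) * (12*(3 + (n:ℂ))*(4 + (n:ℂ)))) / (48*(1 + (n:ℂ))*(2 + (n:ℂ))*(3 + (n:ℂ))*(4 + (n:ℂ))) := by
    rw [div_eq_div_iff (mul_ne_zero (mul_ne_zero ((by norm_num)) (h1')) (h2')) hD]; ring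
  have cv24 : (-(3 + 10*l + 6*(n:ℂ) + 4*l*(n:ℂ))) / (2 * (1 + (n:ℂ)) * (2 + (n:ℂ)) * (3 + (n:ℂ))) = ((-(3 + 10*l + 6*(n:ℂ) + 4*l*(n:ℂ))) * (24*(4 + (n:ℂ)))) / (48*(1 + (n:ℂ))*(2 + (n:ℂ))*(3 + (n:ℂ))*(4 + (n:ℂ))) := by
    rw [div_eq_div_iff (mul_ne_zero (mul_ne_zero (mul_ne_zero ((by norm_num)) (h1')) (h2')) (h3')) hD]; ring
  have cv25 : (-((-1:ℂ)^n * (3 + 2*l))) / (4 * (3 + (n:ℂ))) = ((-((-1:ℂ)^n * (3 + 2*l))) * (12*(1 + (n:ℂ))*(2 + (n:ℂ))*(4 + (n:ℂ)))) / (48*(1 + (n:ℂ))*(2 + (n:ℂ))*(3 + (n:ℂ))*(4 + (n:ℂ))) := by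
    rw [div_eq_div_iff (mul_ne_zero ((by norm_num)) (h3')) hD]; ring
  have cv26 : (-(3 * (5 + 2*l + 2*(n:ℂ)))) / ((1 + (n:ℂ)) * (2 + (n:ℂ)) * (3 + (n:ℂ)) * (4 + (n:ℂ))) = ((-(3 * (5 + 2*l + 2*(n:ℂ)))) * 48) / (48*(1 + (n:ℂ))*(2 + (n:ℂ))*(3 + (n:ℂ))*(4 + (n:ℂ))) := by
    rw [div_eq_div_iff (mul_ne_zero (mul_ne_zero (mul_ne_zero h1' h2') (h3')) (h4')) hD]; ring
  have cv27 : (-(-15 - 2*l - 6*(n:ℂ) + 4*l*(n:ℂ))) / (2 * (1 + (n:ℂ)) * (2 + (n:ℂ)) * (3 + (n:ℂ)) * (4 + (n:ℂ))) = ((-(-15 - 2*l - 6*(n:ℂ) + 4*l*(n:ℂ))) * 24) / (48*(1 + (n:ℂ))*(2 + (n:ℂ))*(3 + (n:ℂ))*(4 + (n:ℂ))) := by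
    rw [div_eq_div_iff (mul_ne_zero (mul_ne_zero (mul_ne_zero (mul_ne_zero ((by norm_num)) (h1')) (h2')) (h3')) (h4')) hD]; ring
  have cv28 : ((-1:ℂ)^n * (45 + 40*l + 12*l^2 + 25*(n:ℂ) + 47*l*(n:ℂ) + 22*l^2*(n:ℂ) + 14*l*(n:ℂ)^2 + 12*l^2*(n:ℂ)^2 - (n:ℂ)^3 + l*(n:ℂ)^3 + 2*l^2*(n:ℂ)^3)) / (2 * (1 + (n:ℂ)) * (2 + (n:ℂ)) * (3 + (n:ℂ)) * (4 + (n:ℂ))) = (((-1:ℂ)^n * (45 + 40*l + 12*l^2 + 25*(n:ℂ) + 47*l*(n:ℂ) + 22*l^2*(n:ℂ) + 14*l*(n:ℂ)^2 + 12*l^2*(n:ℂ)^2 - (n:ℂ)^3 + l*(n:ℂ)^3 + 2*l^2*(n:ℂ)^3)) * 24) / (48*(1 + (n:ℂ))*(2 + (n:ℂ))*(3 + (n:ℂ))*(4 + (n:ℂ))) := by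
    rw [div_eq_div_iff (mul_ne_zero (mul_ne_zero (mul_ne_zero (mul_ne_zero ((by norm_num)) (h1')) (h2')) (h3')) (h4')) hD]; ring
  have cv29 : ((-(3 + 10*l + 6*(n:ℂ) + 4*l*(n:ℂ)) - 12)/2 * (-(1 - ((n:ℂ)+4) + ((n:ℂ)+4)*((n:ℂ)+3)/2 - ((n:ℂ)+4)*((n:ℂ)+3)*((n:ℂ)+2)/6 + ((n:ℂ)+4)*((n:ℂ)+3)*((n:ℂ)+2)*((n:ℂ)+1)/24) - (-1:ℂ)^n * (-(((n:ℂ)+4)*((n:ℂ)+3)*((n:ℂ)+2)/6) + ((n:ℂ)+4)*((n:ℂ)+3)/2 - (((n:ℂ)+4)) + 1))) / (((n:ℂ)+1)*((n:ℂ)+2)*((n:ℂ)+3)*((n:ℂ)+4)) = (((-(3 + 10*l + 6*(n:ℂ) + 4*l*(n:ℂ)) - 12)/2 * (-(1 - ((n:ℂ)+4) + ((n:ℂ)+4)*((n:ℂ)+3)/2 - ((n:ℂ)+4)*((n:ℂ)+3)*((n:ℂ)+2)/6 + ((n:ℂ)+4)*((n:ℂ)+3)*((n:ℂ)+2)*((n:ℂ)+1)/24)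 - (-1:ℂ)^n * (-(((n:ℂ)+4)*((n:ℂ)+3)*((n:ℂ)+2)/6) + ((n:ℂ)+4)*((n:ℂ)+3)/2 - (((n:ℂ)+4)) + 1))) * 48) / (48*(1 + (n:ℂ))*(2 + (n:ℂ))*(3 + (n:ℂ))*(4 + (n:ℂ))) := by
    rw [div_eq_div_iff (hP) hD]; ring
  have cv30 : ((n:ℂ) * ((n:ℂ) + 7) * l * (2*l - 1)) / (24 * ((n:ℂ) + 3) * ((n:ℂ) + 4)) = (((n:ℂ) * ((n:ℂ) + 7) * l * (2*l - 1)) * (2*(1 + (n:ℂ))*(2 + (n:ℂ)))) / (48*(1 + (n:ℂ))*(2 + (n:ℂ))*(3 + (n:ℂ))*(4 + (n:ℂ))) := by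
    rw [div_eq_div_iff (mul_ne_zero (mul_ne_zero ((by norm_num)) (h3)) (h4)) hD]; ring
  -- final assembly
  rw [split, hmid2, hM]
  rw [Finset.sum_Ico_eq_sum_range, show n+5-(n+1) = 4 by omega]
  simp only [Finset.sum_range_succ, Finset.sum_range_zero]
  rw [show n+1+0 = n+1 by omega, show n+1+1 = n+2 by omega, show n+1+2 = n+3 by omega,
    show n+1+3 = n+4 by omega]
  rw [a0, b0, g0, d0, a1, b1, g1, d1, a2, b2, g2, d2, a3, b3, g3, d3, a4, b4, g4, d4,
    at1, bt1, gt1, dt1, at2, bt2, gt2, dt2, at3, bt3, gt3, dt3, at4, bt4, gt4, dt4,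
    p1, p2, p3, p4]
  simp only [cv0, cv1, cv2, cv3, cv4, cv5, cv6, cv7, cv8, cv9, cv10, cv11, cv12, cv13, cv14, cv15, cv16, cv17, cv18, cv19, cv20, cv21, cv22, cv23, cv24, cv25, cv26, cv27, cv28, cv29, cv30]
  rcases Nat.even_or_odd n with hpar | hpar
  · rw [hpar.neg_one_pow]
    ring
  · rw [hpar.neg_one_pow]
    ring
end
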